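/- arXiv:2407.00477 — 4 statements merged into one kernel-verified Lean document; each statement's English description precedes it below -/
import Mathlib

section
/- Let M be a separable metric space with a Borel measure μ, and let S = {y ∈ M | μ(ball(y,ρ)) > 0 for every ρ > 0} be the support of μ. Then for every m ∈ [0,∞], every real r ≥ 0, and every finite nonempty subset τ of S: (a) if there exists x ∈ S with τ ⊆ B(x,r) and μ(B(x,r) ∩ S) ≥ m, then there exists x' ∈ M with τ ⊆ B(x',r) and μ(B(x',r)) ≥ m; and (b) if there exists x ∈ M with τ ⊆ B(x,r) and μ(B(x,r)) ≥ m, then there exists y ∈ S with τ ⊆ B(y,2r) and μ(B(y,2r) ∩ S) ≥ m. (This expresses the inclusions DC(d|_{S×S}, μ|_S)_{m,r} ⊆ DC(d,μ)_{m,r} ⊆ DC(d|_{S×S}, μ|_S)_{m,2r} of Theorem 1.4.) -/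
open Metric MeasureTheory
open scoped ENNReal NNReal

/-- Theorem 1.4: the intrinsic dual degree Čech bifiltration is (1,2)-interleaved
with the ambient one, expressed at the level of simplices. -/
theorem dual_degree_cech_intrinsic_ambient_inclusions
    {M : Type*} [MetricSpace M] [TopologicalSpace.SeparableSpace M]
    [MeasurableSpace M] [BorelSpace M] (μ : Measure M)
    (S : Set M) (hS : S = {y : M | ∀ ρ : ℝ, 0 < ρ → 0 < μ (ball y ρ)})
    (m : ℝ≥0∞) (r : ℝ) (hr : 0 ≤ r)
    (τ : Set M) (hτfin : τ.Finite) (hτne : τ.Nonempty) (hτS : τ ⊆ S) :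
    ((∃ x ∈ S, τ ⊆ closedBall x r ∧ m ≤ μ (closedBall x r ∩ S)) →
      ∃ x' : M, τ ⊆ closedBall x' r ∧ m ≤ μ (closedBall x' r)) ∧
    ((∃ x : M, τ ⊆ closedBall x r ∧ m ≤ μ (closedBall x r)) →
      ∃ y ∈ S, τ ⊆ closedBall y (2 * r) ∧ m ≤ μ (closedBall y (2 * r) ∩ S)) := by
  have hScompl : μ Sᶜ = 0 := by
    -- every point of Sᶜ has a ball of measure zero around it
    have hmem : ∀ z : (Sᶜ : Set M), ∃ ρ : ℝ, 0 < ρ ∧ μ (ball (z : M) ρ) = 0 := by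
      rintro ⟨z, hz⟩
      rw [hS] at hz
      simp only [Set.mem_compl_iff, Set.mem_setOf_eq, not_forall] at hz
      obtain ⟨ρ, hρ, hμρ⟩ := hz
      exact ⟨ρ, hρ, le_antisymm (le_of_not_gt hμρ) zero_le⟩
    choose ρ hρpos hρnull using hmem
    haveI : SecondCountableTopology M := UniformSpace.secondCountable_of_separable M
    obtain ⟨T, hTc, hTU⟩ := TopologicalSpace.isOpen_iUnion_countable
      (fun z : (Sᶜ : Set M) => ball (z : M) (ρ z)) (fun z => isOpen_ball)
    have hcover : Sᶜ ⊆ ⋃ z ∈ T, ball (z : M) (ρ z) := by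
      rw [hTU]
      intro x hx
      exact Set.mem_iUnion.2 ⟨⟨x, hx⟩, mem_ball_self (hρpos ⟨x, hx⟩)⟩
    refine measure_mono_null hcover ?_
    exact (measure_biUnion_null_iff hTc).2 fun z _ => hρnull z
  constructor
  · rintro ⟨x, _, hτx, hm⟩
    exact ⟨x, hτx, le_trans hm (measure_mono Set.inter_subset_left)⟩
  · rintro ⟨x, hτx, hm⟩
    obtain ⟨y, hy⟩ := hτne
    have hyx : dist y x ≤ r := mem_closedBall.mp (hτx hy)
    have hsub : closedBall x r ⊆ closedBall y (2 * r) := by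
      intro z hz
      rw [mem_closedBall] at hz ⊢
      calc dist z y ≤ dist z x + dist x y := dist_triangle _ _ _
        _ ≤ r + r := add_le_add hz (by rwa [dist_comm] at hyx)
        _ = 2 * r := by ring
    refine ⟨y, hτS hy, fun z hz => hsub (hτx hz), ?_⟩
    rw [measure_inter_conull hScompl]
    exact le_trans hm (measure_mono hsub)
end

section
/- Let M be a metric space, let μ₀ and μ₁ be Borel measures on M, and let ε ≥ 0 be such that for every Borel set B ⊆ M one has μ₀(B) ≤ μ₁(B^ε) + ε and μ₁(B) ≤ μ₀(B^ε) + ε, where B^ε = ⋃_{y∈B} B(y,ε) is the ε-offset. Then for every finite nonempty subset σ of M and every r ≥ 0: μ₀(⋂_{x∈σ} B(x,r)) ≤ μ₁(⋂_{x∈σ} B(x,r+ε)) + ε and μ₁(⋂_{x∈σ} B(x,r)) ≤ μ₀(⋂_{x∈σ} B(x,r+ε)) + ε. In other words, the identity map of M is a weak ε-interleaving of the set bifiltrations f₀(σ,r) = μ₀(⋂_{x∈σ}B(x,r)) and f₁(σ,r) = μ₁(⋂_{x∈σ}B(x,r)). -/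
open Metric MeasureTheory
open scoped ENNReal NNReal

/-- The key step in the proof of Theorem 1.1: if μ₀ and μ₁ are of Prohorov distance
at most ε, then the identity of M is a weak ε-interleaving of the set bifiltrations
f_i(σ,r) = μ_i(⋂_{x∈σ} B(x,r)). -/
theorem prohorov_bound_gives_weak_interleaving_of_ball_bifiltrations
    {M : Type*} [MetricSpace M] [MeasurableSpace M] [BorelSpace M]
    (μ₀ μ₁ : Measure M) (ε : ℝ≥0)
    (h₀ : ∀ B : Set M, MeasurableSet B →
      μ₀ B ≤ μ₁ (⋃ y ∈ B, closedBall y (ε : ℝ)) + (ε : ℝ≥0∞))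
    (h₁ : ∀ B : Set M, MeasurableSet B →
      μ₁ B ≤ μ₀ (⋃ y ∈ B, closedBall y (ε : ℝ)) + (ε : ℝ≥0∞))
    (σ : Set M) (hσfin : σ.Finite) (hσne : σ.Nonempty) (r : ℝ) (hr : 0 ≤ r) :
    μ₀ (⋂ x ∈ σ, closedBall x r) ≤
        μ₁ (⋂ x ∈ σ, closedBall x (r + (ε : ℝ))) + (ε : ℝ≥0∞) ∧
    μ₁ (⋂ x ∈ σ, closedBall x r) ≤
        μ₀ (⋂ x ∈ σ, closedBall x (r + (ε : ℝ))) + (ε : ℝ≥0∞) := by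
  have hmeas : MeasurableSet (⋂ x ∈ σ, closedBall x r) :=
    (isClosed_biInter fun x _ => isClosed_closedBall).measurableSet
  have hsub : (⋃ y ∈ (⋂ x ∈ σ, closedBall x r), closedBall y (ε : ℝ)) ⊆
      ⋂ x ∈ σ, closedBall x (r + (ε : ℝ)) := by
    intro z hz
    simp only [Set.mem_iUnion] at hz
    obtain ⟨y, hy, hzy⟩ := hz
    simp only [Set.mem_iInter, mem_closedBall] at hy ⊢
    intro x hx
    calc dist z x ≤ dist z y + dist y x := dist_triangle _ _ _
      _ ≤ (ε : ℝ) + r := add_le_add (mem_closedBall.mp hzy) (hy x hx)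
      _ = r + (ε : ℝ) := add_comm _ _
  exact ⟨(h₀ _ hmeas).trans (add_le_add_left (measure_mono hsub) _),
    (h₁ _ hmeas).trans (add_le_add_left (measure_mono hsub) _)⟩
end

section
/- Let (X₀,d₀), (X₁,d₁) and (M,d) be metric spaces with X₀ and X₁ equipped with Borel measures μ₀ and μ₁, let ι₀ : X₀ → M and ι₁ : X₁ → M be distance-preserving maps, let p₀ : M → X₀ be a nearest neighbor projection for ι₀, and set π₀ = p₀ ∘ ι₁ : X₁ → X₀. Let ε ≥ 0 and suppose that for every Borel set B ⊆ M we have (ι₁)_*μ₁(B) ≤ (ι₀)_*μ₀(B^ε) + ε, where B^ε = ⋃_{y∈B} B(y,ε) and (ι)_*μ denotes the pushforward measure. Then for every finite nonempty subset σ of X₁ and every r ≥ 0: μ₁(⋂_{x∈σ} B(x,r)) ≤ μ₀(⋂_{x∈σ} B(π₀(x), 2(r+ε))) + ε. -/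
open Metric MeasureTheory
open scoped ENNReal NNReal

/-- Condition (1) in the proof of Proposition 7.6 (Theorem 1.5): if the pushforward
measures are at Prohorov distance at most ε, then the nearest neighbor projection
π₀ = p₀ ∘ ι₁ satisfies μ₁(B(σ,r)) ≤ μ₀(B(π₀σ, 2(r+ε))) + ε. -/
theorem nearest_neighbor_projection_interleaving_condition_one
    {X₀ X₁ M : Type*} [MetricSpace X₀] [MetricSpace X₁] [MetricSpace M]
    [MeasurableSpace X₀] [BorelSpace X₀] [MeasurableSpace X₁] [BorelSpace X₁]
    [MeasurableSpace M] [BorelSpace M]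
    (μ₀ : Measure X₀) (μ₁ : Measure X₁)
    (ι₀ : X₀ → M) (ι₁ : X₁ → M)
    (hι₀ : ∀ z z' : X₀, dist (ι₀ z) (ι₀ z') = dist z z')
    (hι₁ : ∀ z z' : X₁, dist (ι₁ z) (ι₁ z') = dist z z')
    (p₀ : M → X₀) (hp₀ : ∀ (w : M) (z : X₀), dist w (ι₀ (p₀ w)) ≤ dist w (ι₀ z))
    (π₀ : X₁ → X₀) (hπ₀ : π₀ = p₀ ∘ ι₁)
    (ε : ℝ≥0)
    (hP : ∀ B : Set M, MeasurableSet B →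
      μ₁ (ι₁ ⁻¹' B) ≤ μ₀ (ι₀ ⁻¹' (⋃ y ∈ B, closedBall y (ε : ℝ))) + (ε : ℝ≥0∞))
    (σ : Set X₁) (hσfin : σ.Finite) (hσne : σ.Nonempty) (r : ℝ) (hr : 0 ≤ r) :
    μ₁ (⋂ x ∈ σ, closedBall x r) ≤
      μ₀ (⋂ x ∈ σ, closedBall (π₀ x) (2 * (r + (ε : ℝ)))) + (ε : ℝ≥0∞) := by
  set B : Set M := ⋂ x ∈ σ, closedBall (ι₁ x) r with hB
  have hBmeas : MeasurableSet B := by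
    refine (isClosed_biInter fun x _ => isClosed_closedBall).measurableSet
  have hpre : ι₁ ⁻¹' B = ⋂ x ∈ σ, closedBall x r := by
    ext z
    simp [hB, Set.mem_iInter, mem_closedBall, dist_comm, hι₁]
  have hsub : ι₀ ⁻¹' (⋃ y ∈ B, closedBall y (ε : ℝ)) ⊆
      ⋂ x ∈ σ, closedBall (π₀ x) (2 * (r + (ε : ℝ))) := by
    intro z hz
    simp only [Set.mem_preimage, Set.mem_iUnion] at hz
    obtain ⟨y, hyB, hyz⟩ := hz
    simp only [hB, Set.mem_iInter, mem_closedBall] at hyB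
    simp only [Set.mem_iInter, mem_closedBall]
    intro x hx
    have h1 : dist (ι₀ z) (ι₁ x) ≤ r + (ε : ℝ) := by
      calc dist (ι₀ z) (ι₁ x) ≤ dist (ι₀ z) y + dist y (ι₁ x) := dist_triangle _ _ _
        _ ≤ (ε : ℝ) + r := add_le_add (mem_closedBall.1 hyz) (hyB x hx)
        _ = r + (ε : ℝ) := add_comm _ _
    have h2 : dist (ι₁ x) (ι₀ (π₀ x)) ≤ dist (ι₀ z) (ι₁ x) := by
      rw [hπ₀]
      simpa [dist_comm] using hp₀ (ι₁ x) z
    calc dist z (π₀ x) = dist (ι₀ z) (ι₀ (π₀ x)) := (hι₀ z (π₀ x)).symm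
      _ ≤ dist (ι₀ z) (ι₁ x) + dist (ι₁ x) (ι₀ (π₀ x)) := dist_triangle _ _ _
      _ ≤ (r + (ε : ℝ)) + (r + (ε : ℝ)) := add_le_add h1 (h2.trans h1)
      _ = 2 * (r + (ε : ℝ)) := by ring
  calc μ₁ (⋂ x ∈ σ, closedBall x r) = μ₁ (ι₁ ⁻¹' B) := by rw [hpre]
    _ ≤ μ₀ (ι₀ ⁻¹' (⋃ y ∈ B, closedBall y (ε : ℝ))) + (ε : ℝ≥0∞) := hP B hBmeas
    _ ≤ μ₀ (⋂ x ∈ σ, closedBall (π₀ x) (2 * (r + (ε : ℝ)))) + (ε : ℝ≥0∞) := by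
        exact add_le_add_left (measure_mono hsub) _
end

section
/- Let (X₀,d₀), (X₁,d₁) and (M,d) be metric spaces with Borel measures μ₀ on X₀ and μ₁ on X₁, let ι₀ : X₀ → M and ι₁ : X₁ → M be distance-preserving maps, let p₀ : M → X₀ and p₁ : M → X₁ be nearest neighbor projections for ι₀ and ι₁ respectively, and set π₀ = p₀ ∘ ι₁ and π₁ = p₁ ∘ ι₀. Let ε ≥ 0 and suppose that for every Borel set B ⊆ M both (ι₁)_*μ₁(B) ≤ (ι₀)_*μ₀(B^ε) + ε and (ι₀)_*μ₀(B) ≤ (ι₁)_*μ₁(B^ε) + ε. Then for every finite nonempty subset σ of X₁ and every r ≥ 0: μ₁(⋂_{x∈σ} B(x,r)) ≤ μ₁(⋂_{x∈σ} (B(x, 4r+6ε) ∩ B(π₁(π₀(x)), 4r+6ε))) + 2ε. -/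
open Metric MeasureTheory
open scoped ENNReal NNReal

/-- Condition (3) in the proof of Proposition 7.6 (Theorem 1.5): with
π₀ = p₀ ∘ ι₁ and π₁ = p₁ ∘ ι₀, the composite π₁ ∘ π₀ is contiguous to the
inclusion after the parameter shift (m,r) ↦ (m − 2ε, 4r + 6ε). -/
theorem nearest_neighbor_projection_interleaving_condition_three
    {X₀ X₁ M : Type*} [MetricSpace X₀] [MetricSpace X₁] [MetricSpace M]
    [MeasurableSpace X₀] [BorelSpace X₀] [MeasurableSpace X₁] [BorelSpace X₁]
    [MeasurableSpace M] [BorelSpace M]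
    (μ₀ : Measure X₀) (μ₁ : Measure X₁)
    (ι₀ : X₀ → M) (ι₁ : X₁ → M)
    (hι₀ : ∀ z z' : X₀, dist (ι₀ z) (ι₀ z') = dist z z')
    (hι₁ : ∀ z z' : X₁, dist (ι₁ z) (ι₁ z') = dist z z')
    (p₀ : M → X₀) (hp₀ : ∀ (w : M) (z : X₀), dist w (ι₀ (p₀ w)) ≤ dist w (ι₀ z))
    (p₁ : M → X₁) (hp₁ : ∀ (w : M) (z : X₁), dist w (ι₁ (p₁ w)) ≤ dist w (ι₁ z))
    (π₀ : X₁ → X₀) (hπ₀ : π₀ = p₀ ∘ ι₁)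
    (π₁ : X₀ → X₁) (hπ₁ : π₁ = p₁ ∘ ι₀)
    (ε : ℝ≥0)
    (hP₁ : ∀ B : Set M, MeasurableSet B →
      μ₁ (ι₁ ⁻¹' B) ≤ μ₀ (ι₀ ⁻¹' (⋃ y ∈ B, closedBall y (ε : ℝ))) + (ε : ℝ≥0∞))
    (hP₀ : ∀ B : Set M, MeasurableSet B →
      μ₀ (ι₀ ⁻¹' B) ≤ μ₁ (ι₁ ⁻¹' (⋃ y ∈ B, closedBall y (ε : ℝ))) + (ε : ℝ≥0∞))
    (σ : Set X₁) (hσfin : σ.Finite) (hσne : σ.Nonempty) (r : ℝ) (hr : 0 ≤ r) :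
    μ₁ (⋂ x ∈ σ, closedBall x r) ≤
      μ₁ (⋂ x ∈ σ, (closedBall x (4 * r + 6 * (ε : ℝ)) ∩
        closedBall (π₁ (π₀ x)) (4 * r + 6 * (ε : ℝ)))) + 2 * (ε : ℝ≥0∞) := by
  subst hπ₀ hπ₁
  have hε : (0:ℝ) ≤ ε := ε.coe_nonneg
  set S : Set M := ⋂ x ∈ σ, closedBall (ι₁ x) r with hS
  set U : Set M := ⋂ x ∈ σ,
      (closedBall (ι₁ x) (r + ε) ∩ closedBall (ι₀ (p₀ (ι₁ x))) (2*r + 2*ε)) with hU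
  have hSmeas : MeasurableSet S :=
    MeasurableSet.biInter hσfin.countable fun x _ => measurableSet_closedBall
  have hUmeas : MeasurableSet U :=
    MeasurableSet.biInter hσfin.countable fun x _ =>
      measurableSet_closedBall.inter measurableSet_closedBall
  have h1 : ι₁ ⁻¹' S = ⋂ x ∈ σ, closedBall x r := by
    ext y
    simp only [hS, Set.mem_preimage, Set.mem_iInter, mem_closedBall, hι₁]
  have h3 : ι₀ ⁻¹' (⋃ y ∈ S, closedBall y (ε:ℝ)) ⊆ ι₀ ⁻¹' U := by
    intro z hz
    simp only [Set.mem_preimage, Set.mem_iUnion, exists_prop] at hz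
    obtain ⟨y, hyS, hzy⟩ := hz
    rw [mem_closedBall] at hzy
    simp only [hS, Set.mem_iInter, mem_closedBall] at hyS
    simp only [Set.mem_preimage, hU, Set.mem_iInter, Set.mem_inter_iff, mem_closedBall]
    intro x hx
    have hA : dist (ι₀ z) (ι₁ x) ≤ r + ε := by
      calc dist (ι₀ z) (ι₁ x) ≤ dist (ι₀ z) y + dist y (ι₁ x) := dist_triangle _ _ _
        _ ≤ ε + r := add_le_add hzy (hyS x hx)
        _ = r + ε := by ring
    refine ⟨hA, ?_⟩
    have hB : dist (ι₁ x) (ι₀ (p₀ (ι₁ x))) ≤ r + ε := by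
      refine le_trans (hp₀ (ι₁ x) z) ?_
      rw [dist_comm]; exact hA
    calc dist (ι₀ z) (ι₀ (p₀ (ι₁ x)))
        ≤ dist (ι₀ z) (ι₁ x) + dist (ι₁ x) (ι₀ (p₀ (ι₁ x))) := dist_triangle _ _ _
      _ ≤ (r + ε) + (r + ε) := add_le_add hA hB
      _ = 2*r + 2*ε := by ring
  have h5 : ι₁ ⁻¹' (⋃ y ∈ U, closedBall y (ε:ℝ)) ⊆
      ⋂ x ∈ σ, (closedBall x (4 * r + 6 * (ε : ℝ)) ∩
        closedBall ((p₁ ∘ ι₀) ((p₀ ∘ ι₁) x)) (4 * r + 6 * (ε : ℝ))) := by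
    intro y hy
    simp only [Set.mem_preimage, Set.mem_iUnion, exists_prop] at hy
    obtain ⟨w, hwU, hyw⟩ := hy
    rw [mem_closedBall] at hyw
    simp only [hU, Set.mem_iInter, Set.mem_inter_iff, mem_closedBall] at hwU
    simp only [Set.mem_iInter, Set.mem_inter_iff, mem_closedBall, Function.comp_apply]
    intro x hx
    obtain ⟨hw1, hw2⟩ := hwU x hx
    have hC : dist (ι₁ y) (ι₁ x) ≤ r + 2*ε := by
      calc dist (ι₁ y) (ι₁ x) ≤ dist (ι₁ y) w + dist w (ι₁ x) := dist_triangle _ _ _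
        _ ≤ ε + (r + ε) := add_le_add hyw hw1
        _ = r + 2*ε := by ring
    have hD : dist (ι₁ y) (ι₀ (p₀ (ι₁ x))) ≤ 2*r + 3*ε := by
      calc dist (ι₁ y) (ι₀ (p₀ (ι₁ x)))
          ≤ dist (ι₁ y) w + dist w (ι₀ (p₀ (ι₁ x))) := dist_triangle _ _ _
        _ ≤ ε + (2*r + 2*ε) := add_le_add hyw hw2
        _ = 2*r + 3*ε := by ring
    constructor
    · have := hι₁ y x ▸ hC
      linarith [hι₁ y x, hC]
    · have hE : dist (ι₀ (p₀ (ι₁ x))) (ι₁ (p₁ (ι₀ (p₀ (ι₁ x))))) ≤ 2*r + 3*ε := by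
        refine le_trans (hp₁ (ι₀ (p₀ (ι₁ x))) y) ?_
        rw [dist_comm]; exact hD
      have : dist (ι₁ y) (ι₁ (p₁ (ι₀ (p₀ (ι₁ x))))) ≤ 4*r + 6*ε := by
        calc dist (ι₁ y) (ι₁ (p₁ (ι₀ (p₀ (ι₁ x)))))
            ≤ dist (ι₁ y) (ι₀ (p₀ (ι₁ x))) + dist (ι₀ (p₀ (ι₁ x))) (ι₁ (p₁ (ι₀ (p₀ (ι₁ x))))) :=
              dist_triangle _ _ _
          _ ≤ (2*r + 3*ε) + (2*r + 3*ε) := add_le_add hD hE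
          _ = 4*r + 6*ε := by ring
      rw [hι₁] at this
      exact this
  calc μ₁ (⋂ x ∈ σ, closedBall x r) = μ₁ (ι₁ ⁻¹' S) := by rw [h1]
    _ ≤ μ₀ (ι₀ ⁻¹' (⋃ y ∈ S, closedBall y (ε:ℝ))) + ε := hP₁ S hSmeas
    _ ≤ μ₀ (ι₀ ⁻¹' U) + ε := add_le_add_left (measure_mono h3) _
    _ ≤ (μ₁ (ι₁ ⁻¹' (⋃ y ∈ U, closedBall y (ε:ℝ))) + ε) + ε :=
        add_le_add_left (hP₀ U hUmeas) _
    _ ≤ (μ₁ (⋂ x ∈ σ, (closedBall x (4 * r + 6 * (ε : ℝ)) ∩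
          closedBall ((p₁ ∘ ι₀) ((p₀ ∘ ι₁) x)) (4 * r + 6 * (ε : ℝ)))) + ε) + ε := by
        exact add_le_add_left (add_le_add_left (measure_mono h5) _) _
    _ = _ + 2 * (ε : ℝ≥0∞) := by rw [add_assoc, two_mul]
end
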